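/- In the setting of a finite-index normal subgroup N ⊴ G with quotient A, an irreducible N-representation L with full stabilizer, and the associated 2-cocycle α and twisted group algebra 𝒜 with basis {ρ_a}, the formula (f ⊗ v)·ρ_a := (fa) ⊗ γ(f,a)·θ_a(v) defines the structure of a right 𝒜-module on k[A] ⊗ L, and this right action commutes with the left G-action ι(a)g·(f⊗v) = (af) ⊗ γ(a,f)·(ι(f)⁻¹gι(f))·v. -/

import Mathlib

/-!
Everything reduces to identities in `N`. Writing the right action of `ρ_a` as
`F ↦ (b ↦ γ(ba⁻¹, a) · θ_a (F (ba⁻¹)))`, the intertwining property of `θ_b` moves it past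
`ρ`, so `(F·ρ_a)·ρ_b` is a single element of `N` applied to `θ_b (θ_a v)`; the defining
identity of `α` turns `θ_b ∘ θ_a` into `α(a,b) γ(a,b)⁻¹ θ_{ab}`, and the two elements of `N`
agree by cancellation in `G`. The left `G`-action translates the index on the left and
the right action on the right, so they commute by the same bookkeeping.
-/

namespace Representation

variable {k G V : Type*} [CommSemiring k] [AddCommMonoid V] [Module k V]

lemma apply_apply_eq_mul_apply [Monoid G] (ρ : Representation k G V) (g h : G) (v : V) :
    ρ g (ρ h v) = ρ (g * h) v := by
  rw [map_mul, Module.End.mul_apply]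

lemma apply_eq_self_of_coe_eq_one [Group G] {N : Subgroup G} (ρ : Representation k N V) {n : N}
    (h : (n : G) = 1) (v : V) : ρ n v = v := by
  rw [show n = 1 from Subtype.ext h, map_one, Module.End.one_apply]

end Representation

namespace CliffordTwist

open QuotientGroup

variable {k G V : Type*} [CommSemiring k] [Group G] [AddCommMonoid V] [Module k V]
  {N : Subgroup G} [hN : N.Normal] (ρ : Representation k N V)

/-- `θ a` is an isomorphism `L ≅ ^{ι a}L`. -/
def IntertwinesConj (ι : G ⧸ N → G) (θ : G ⧸ N → V ≃ₗ[k] V) : Prop :=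
  ∀ (a : G ⧸ N) (n : N) (v : V),
    θ a (ρ n v) = ρ ⟨(ι a)⁻¹ * n * ι a, by simpa using hN.conj_mem _ n.2 (ι a)⁻¹⟩ (θ a v)

variable {ι : G ⧸ N → G} (hι : ∀ a, mk' N (ι a) = a)

def sectionCocycle (a b : G ⧸ N) : N :=
  ⟨(ι (a * b))⁻¹ * ι a * ι b,
    (eq_one_iff _).mp (by simp only [← mk'_apply, map_mul, map_inv, hι]; simp)⟩

/-- The action of the basis element `ρ_a` on `k[A] ⊗ L`, realized as functions `A → V`
(`F b` is the coefficient of `b`). -/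
def twistedRightAct (θ : G ⧸ N → V ≃ₗ[k] V) (a : G ⧸ N) (F : G ⧸ N → V) (b : G ⧸ N) : V :=
  ρ ⟨(ι b)⁻¹ * ι (b * a⁻¹) * ι a,
      (eq_one_iff _).mp (by simp only [← mk'_apply, map_mul, map_inv, hι]; simp)⟩
    (θ a (F (b * a⁻¹)))

/-- The left `G`-action `ι(a)g·(f ⊗ v) = af ⊗ γ(a,f)·(ι(f)⁻¹gι(f))·v` in closed form. -/
def inducedAct (x : G) (F : G ⧸ N → V) (b : G ⧸ N) : V :=
  ρ ⟨(ι b)⁻¹ * x * ι ((mk' N x)⁻¹ * b),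
      (eq_one_iff _).mp (by simp only [← mk'_apply, map_mul, map_inv, hι]; simp)⟩
    (F ((mk' N x)⁻¹ * b))

variable {θ : G ⧸ N → V ≃ₗ[k] V}

lemma twistedRightAct_smul_add (a : G ⧸ N) (c : k) (F F' : G ⧸ N → V) :
    twistedRightAct ρ hι θ a (c • F + F') =
      c • twistedRightAct ρ hι θ a F + twistedRightAct ρ hι θ a F' := by
  funext b
  simp [twistedRightAct]

lemma twistedRightAct_one (hι1 : ι 1 = 1) (hθ1 : θ 1 = LinearEquiv.refl k V) (F : G ⧸ N → V) :
    twistedRightAct ρ hι θ 1 F = F := by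
  funext b
  simp only [twistedRightAct, hθ1, LinearEquiv.refl_apply, inv_one, mul_one]
  exact ρ.apply_eq_self_of_coe_eq_one (by simp [hι1]) _

lemma twistedRightAct_twistedRightAct (hθ : IntertwinesConj ρ ι θ) {α : G ⧸ N → G ⧸ N → kˣ}
    (hα : ∀ a b v, ρ (sectionCocycle hι a b) (θ b (θ a v)) = (α a b : k) • θ (a * b) v)
    (a b : G ⧸ N) (F : G ⧸ N → V) :
    twistedRightAct ρ hι θ b (twistedRightAct ρ hι θ a F) =
      (α a b : k) • twistedRightAct ρ hι θ (a * b) F := by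
  funext c
  rw [Pi.smul_apply, twistedRightAct, twistedRightAct, twistedRightAct, hθ, ← map_smul, ← hα,
    ρ.apply_apply_eq_mul_apply, ρ.apply_apply_eq_mul_apply]
  congr 1
  · ext
    simp [sectionCocycle, mul_assoc]
  · rw [mul_inv_rev, mul_assoc]

lemma inducedAct_twistedRightAct (hθ : IntertwinesConj ρ ι θ) (x : G) (a : G ⧸ N)
    (F : G ⧸ N → V) :
    inducedAct ρ hι x (twistedRightAct ρ hι θ a F) =
      twistedRightAct ρ hι θ a (inducedAct ρ hι x F) := by
  funext c
  rw [inducedAct, twistedRightAct, twistedRightAct, inducedAct, hθ, ρ.apply_apply_eq_mul_apply,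
    ρ.apply_apply_eq_mul_apply]
  congr 1
  · ext
    simp [mul_assoc]
  · rw [mul_assoc]

end CliffordTwist

open CliffordTwist

/-- In the Clifford-theoretic setting (`N ⊴ G` of finite index, `A = G ⧸ N`, section `ι`
with `ι 1 = 1`, irreducible `N`-representation `L = (V, ρ)` with full stabilizer witnessed
by isomorphisms `θ_a : L ≅ {}^{ι a}L`, `θ_1 = id`, and associated 2-cocycle `α` with
`γ(a,b)·θ_b(θ_a v) = α(a,b)•θ_{ab} v`), the formula `(f ⊗ v)·ρ_a := (fa) ⊗ γ(f,a)·θ_a(v)`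
defines a right module structure over the twisted group algebra `𝒜` on `k[A] ⊗ L`
(realized as functions `A → V`, where `RA a F b = ρ(γ(b a⁻¹, a)) (θ_a (F (b a⁻¹)))`),
and this right action commutes with the left `G`-action
`ι(a)g·(f⊗v) = af ⊗ γ(a,f)·(ι(f)⁻¹gι(f))·v` (closed form `σ`). -/
theorem right_twisted_algebra_action {k G V : Type*} [Field k] [Group G]
    [AddCommGroup V] [Module k V]
    (N : Subgroup G) [hN : N.Normal]
    (ρ : Representation k N V)
    (ι : G ⧸ N → G) (hι : ∀ a, QuotientGroup.mk' N (ι a) = a) (hι1 : ι 1 = 1)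
    (θ : G ⧸ N → (V ≃ₗ[k] V)) (hθ1 : θ 1 = LinearEquiv.refl k V)
    (hθ : ∀ (a : G ⧸ N) (n : N) (v : V),
      θ a (ρ n v) =
        ρ ⟨(ι a)⁻¹ * ↑n * ι a, by simpa using hN.conj_mem _ n.2 (ι a)⁻¹⟩ (θ a v))
    (α : G ⧸ N → G ⧸ N → kˣ)
    (hα : ∀ (a b : G ⧸ N) (v : V),
      ρ ⟨(ι (a * b))⁻¹ * ι a * ι b, by
          rw [← QuotientGroup.eq_one_iff]
          show (QuotientGroup.mk' N) ((ι (a * b))⁻¹ * ι a * ι b) = 1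
          simp only [map_mul, map_inv, hι]
          group⟩
        (θ b (θ a v)) = (α a b : k) • θ (a * b) v)
    (σ : Representation k G ((G ⧸ N) → V))
    (hσ : ∀ (x : G) (F : (G ⧸ N) → V) (b : G ⧸ N),
      σ x F b =
        ρ ⟨(ι b)⁻¹ * x * ι ((QuotientGroup.mk' N x)⁻¹ * b), by
            rw [← QuotientGroup.eq_one_iff]
            show (QuotientGroup.mk' N) ((ι b)⁻¹ * x * ι ((QuotientGroup.mk' N x)⁻¹ * b)) = 1
            simp only [map_mul, map_inv, hι]
            group⟩
          (F ((QuotientGroup.mk' N x)⁻¹ * b)))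
    (RA : G ⧸ N → ((G ⧸ N) → V) → ((G ⧸ N) → V))
    (hRA : ∀ (a : G ⧸ N) (F : (G ⧸ N) → V) (b : G ⧸ N),
      RA a F b =
        ρ ⟨(ι b)⁻¹ * ι (b * a⁻¹) * ι a, by
            rw [← QuotientGroup.eq_one_iff]
            show (QuotientGroup.mk' N) ((ι b)⁻¹ * ι (b * a⁻¹) * ι a) = 1
            simp only [map_mul, map_inv, hι]
            group⟩
          (θ a (F (b * a⁻¹)))) :
    (∀ (a : G ⧸ N) (c : k) (F F' : (G ⧸ N) → V), RA a (c • F + F') = c • RA a F + RA a F') ∧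
    (∀ F, RA 1 F = F) ∧
    (∀ (a b : G ⧸ N) (F : (G ⧸ N) → V), RA b (RA a F) = (α a b : k) • RA (a * b) F) ∧
    (∀ (x : G) (a : G ⧸ N) (F : (G ⧸ N) → V), σ x (RA a F) = RA a (σ x F)) := by
  have hRA' : RA = twistedRightAct ρ hι θ := funext fun a => funext fun F => funext (hRA a F)
  have hσ' : ∀ x F, σ x F = inducedAct ρ hι x F := fun x F => funext (hσ x F)
  subst hRA'
  refine ⟨twistedRightAct_smul_add ρ hι, fun F => twistedRightAct_one ρ hι hι1 hθ1 F,
    twistedRightAct_twistedRightAct ρ hι hθ hα, fun x a F => ?_⟩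
  rw [hσ', hσ', inducedAct_twistedRightAct ρ hι hθ]
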